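/- A differential operator S = Σ_{t=0}^{T} p_t ∂^t with polynomial coefficients satisfies E[Sf(N)] = 0 for all polynomials f (where N is standard Gaussian) if and only if p_0 = - Σ_{t=1}^{T} δ^t p_t, where δ is the adjoint operator δg(x) = x g(x) - g'(x) and δ^t denotes its t-fold iteration. -/

import Mathlib

open MeasureTheory Polynomial

/-- Density of the standard Gaussian distribution. -/
noncomputable def gaussDensity (x : ℝ) : ℝ := Real.exp (-x ^ 2 / 2) / Real.sqrt (2 * Real.pi)

/-- The adjoint (divergence) operator `δ q = x q - q'` on polynomials. -/
noncomputable def deltaOp (q : Polynomial ℝ) : Polynomial ℝ := X * q - derivative q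

/-!
Gaussian integration by parts: since `φ' = -x φ` for the Gaussian density `φ`, the function
`-r φ` is an antiderivative of `(δ r) φ` vanishing at `±∞`, so `E[δ r (N)] = 0` for every
polynomial `r`. Applied to `r = q f`, with `δ (q f) = (δ q) f - q f'`, this gives
`E[q f'(N)] = E[(δ q) f (N)]`, and iterating, `E[S f(N)] = E[Q f (N)]` with `Q = Σ_t δ^t p_t`.
The condition of the theorem says exactly `Q = 0`; conversely, taking `f = Q` gives
`E[Q(N)^2] = 0`, which forces `Q = 0` because the Gaussian density is positive.
-/

open Filter Topology

lemma gaussDensity_eq (x : ℝ) :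
    gaussDensity x = (Real.sqrt (2 * Real.pi))⁻¹ * Real.exp (-(1 / 2) * x ^ 2) := by
  rw [gaussDensity, div_eq_inv_mul]
  ring_nf

lemma gaussDensity_pos (x : ℝ) : 0 < gaussDensity x := by
  unfold gaussDensity
  positivity

lemma continuous_gaussDensity : Continuous gaussDensity := by
  unfold gaussDensity
  fun_prop

lemma hasDerivAt_gaussDensity (x : ℝ) : HasDerivAt gaussDensity (-x * gaussDensity x) x := by
  rw [funext gaussDensity_eq]
  exact (((hasDerivAt_pow 2 x).const_mul _).exp.const_mul _).congr_deriv (by ring)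

lemma integrable_eval_mul_gaussDensity (P : ℝ[X]) :
    Integrable fun x ↦ P.eval x * gaussDensity x := by
  induction P using Polynomial.induction_on' with
  | add p q hp hq =>
    simp only [eval_add, add_mul]
    exact hp.add hq
  | monomial n c =>
    have h := (integrable_rpow_mul_exp_neg_mul_sq (b := 1 / 2) (by norm_num)
      (s := n) (by linarith [n.cast_nonneg (α := ℝ)])).const_mul (c * (Real.sqrt (2 * Real.pi))⁻¹)
    refine h.congr (ae_of_all _ fun x ↦ ?_)
    simp only [eval_monomial, gaussDensity_eq, Real.rpow_natCast]
    ring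

lemma tendsto_eval_mul_gaussDensity_cocompact (P : ℝ[X]) :
    Tendsto (fun x ↦ P.eval x * gaussDensity x) (cocompact ℝ) (𝓝 0) := by
  induction P using Polynomial.induction_on' with
  | add p q hp hq => simpa only [eval_add, add_mul, add_zero] using hp.add hq
  | monomial n c =>
    rw [tendsto_zero_iff_norm_tendsto_zero]
    have h := (tendsto_rpow_abs_mul_exp_neg_mul_sq_cocompact (a := 1 / 2) (by norm_num)
      n).const_mul (|c| * (Real.sqrt (2 * Real.pi))⁻¹)
    rw [mul_zero] at h
    refine h.congr fun x ↦ ?_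
    rw [eval_monomial, gaussDensity_eq, Real.norm_eq_abs, abs_mul, abs_mul, abs_mul, abs_pow,
      abs_of_pos (Real.exp_pos _), abs_of_pos (by positivity : 0 < (Real.sqrt (2 * Real.pi))⁻¹),
      Real.rpow_natCast]
    ring

/-- The expectation `E[P(N)]` of a polynomial of a standard Gaussian variable `N`. -/
noncomputable def gaussianExpectation : ℝ[X] →ₗ[ℝ] ℝ where
  toFun P := ∫ x, P.eval x * gaussDensity x
  map_add' p q := by
    simp only [eval_add, add_mul]
    exact integral_add (integrable_eval_mul_gaussDensity p) (integrable_eval_mul_gaussDensity q)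
  map_smul' c p := by
    simp only [eval_smul, smul_eq_mul, mul_assoc, integral_const_mul, RingHom.id_apply]

lemma gaussianExpectation_apply (P : ℝ[X]) :
    gaussianExpectation P = ∫ x, P.eval x * gaussDensity x := rfl

lemma gaussianExpectation_deltaOp (r : ℝ[X]) : gaussianExpectation (deltaOp r) = 0 := by
  have hderiv (x : ℝ) : HasDerivAt (fun x ↦ -(r.eval x * gaussDensity x))
      ((deltaOp r).eval x * gaussDensity x) x :=
    ((r.hasDerivAt x).mul (hasDerivAt_gaussDensity x)).neg.congr_deriv (by
      simp only [deltaOp, eval_sub, eval_mul, eval_X]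
      ring)
  have hlim := (tendsto_eval_mul_gaussDensity_cocompact r).neg
  rw [neg_zero] at hlim
  rw [gaussianExpectation_apply]
  simpa using integral_of_hasDerivAt_of_tendsto hderiv (integrable_eval_mul_gaussDensity _)
    (hlim.mono_left atBot_le_cocompact) (hlim.mono_left atTop_le_cocompact)

lemma deltaOp_mul (q f : ℝ[X]) : deltaOp (q * f) = deltaOp q * f - q * derivative f := by
  simp only [deltaOp, derivative_mul]
  ring

lemma gaussianExpectation_deltaOp_mul (q f : ℝ[X]) :
    gaussianExpectation (deltaOp q * f) = gaussianExpectation (q * derivative f) := by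
  have h := gaussianExpectation_deltaOp (q * f)
  rwa [deltaOp_mul, map_sub, sub_eq_zero] at h

lemma gaussianExpectation_iterate_deltaOp_mul (t : ℕ) (q f : ℝ[X]) :
    gaussianExpectation (deltaOp^[t] q * f) = gaussianExpectation (q * derivative^[t] f) := by
  induction t generalizing f with
  | zero => rfl
  | succ t ih =>
    rw [Function.iterate_succ_apply', gaussianExpectation_deltaOp_mul, ih,
      Function.iterate_succ_apply]

lemma integral_sum_eval_mul_iterate_derivative (s : Finset ℕ) (p : ℕ → ℝ[X]) (f : ℝ[X]) :
    ∫ x, (∑ t ∈ s, (p t).eval x * (derivative^[t] f).eval x) * gaussDensity x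
      = gaussianExpectation ((∑ t ∈ s, deltaOp^[t] (p t)) * f) := by
  simp_rw [Finset.sum_mul, map_sum, gaussianExpectation_iterate_deltaOp_mul,
    gaussianExpectation_apply, eval_mul]
  exact integral_finsetSum _ fun t _ ↦ by
    simpa only [eval_mul] using integrable_eval_mul_gaussDensity (p t * derivative^[t] f)

lemma eq_zero_of_gaussianExpectation_mul_self_eq_zero {Q : ℝ[X]}
    (h : gaussianExpectation (Q * Q) = 0) : Q = 0 := by
  have hnonneg : 0 ≤ fun x ↦ (Q * Q).eval x * gaussDensity x := fun x ↦
    mul_nonneg (by simpa only [eval_mul] using mul_self_nonneg _) (gaussDensity_pos x).le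
  have hae := (integral_eq_zero_iff_of_nonneg hnonneg (integrable_eval_mul_gaussDensity _)).1 h
  have hzero := (Continuous.ae_eq_iff_eq volume
    ((Q * Q).continuous.mul continuous_gaussDensity) continuous_zero).1 hae
  refine Polynomial.funext fun x ↦ ?_
  simpa [(gaussDensity_pos x).ne'] using congrFun hzero x

/-- A polynomial-coefficient operator `S = Σ_{t=0}^T p_t ∂^t` satisfies
`E[S f(N)] = 0` for all polynomials `f` iff `p_0 = - Σ_{t=1}^T δ^t p_t`. -/
theorem PSO_iff_coefficient_condition (T : ℕ) (p : ℕ → Polynomial ℝ) :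
    (∀ f : Polynomial ℝ,
        ∫ x : ℝ, (∑ t ∈ Finset.range (T + 1),
            (p t).eval x * ((derivative^[t] f).eval x)) * gaussDensity x = 0)
      ↔ p 0 = -∑ t ∈ Finset.Icc 1 T, deltaOp^[t] (p t) := by
  have hsplit : ∑ t ∈ Finset.range (T + 1), deltaOp^[t] (p t)
      = p 0 + ∑ t ∈ Finset.Icc 1 T, deltaOp^[t] (p t) := by
    rw [Finset.sum_range_eq_add_Ico _ T.add_one_pos, Finset.Ico_add_one_right_eq_Icc]
    rfl
  simp_rw [integral_sum_eval_mul_iterate_derivative, hsplit, eq_neg_iff_add_eq_zero]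
  refine ⟨fun h ↦ eq_zero_of_gaussianExpectation_mul_self_eq_zero (h _), fun h f ↦ ?_⟩
  rw [h, zero_mul, map_zero]
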